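/- Let (A, ρ̄) be a partial H-comodule algebra. Regard A ⊗ H as an H-comodule algebra with coaction δ = I ⊗ Δ, and let B be the smallest H-subcomodule subalgebra of A ⊗ H containing ρ̄(A). Then ρ̄(1_A) · B ⊆ ρ̄(A); consequently ρ̄(A) is a right ideal of B whose unity is the idempotent ρ̄(1_A). -/

import Mathlib

/-!
Let `δ = I ⊗ Δ` and let `P` be the set of `x ∈ A ⊗ H` with
`(ρ̄(1) ⊗ 1) δ(x) ∈ (ρ̄ ⊗ I)(A ⊗ H)`. The coassociativity axiom says exactly that
`ρ̄(A) ⊆ P`. `P` is closed under products because `(ρ̄ ⊗ I)(z) (ρ̄(1) ⊗ 1) = (ρ̄ ⊗ I)(z)`,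
and it is an `H`-subcomodule: over a field, membership in `P ⊗ H` is detected by the
slices `I ⊗ φ`, `φ ∈ H*`, and slicing the last leg of `δ` commutes with `ρ̄ ⊗ I` and with
left multiplication by `ρ̄(1) ⊗ 1`. By minimality `B ⊆ P`, and applying `I ⊗ ε` to
`(ρ̄(1) ⊗ 1) δ(x) = (ρ̄ ⊗ I)(z)` gives `ρ̄(1) x = ρ̄((I ⊗ ε) z)`.
-/

open TensorProduct

/-- The axioms of a (right) partial coaction `ρ : A → A ⊗ H` of a Hopf algebra `H` on a
unital algebra `A`. -/
structure IsPartialCoaction (k : Type*) [Field k] (H A : Type*) [Ring H] [HopfAlgebra k H]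
    [Ring A] [Algebra k A] (ρ : A →ₗ[k] A ⊗[k] H) : Prop where
  map_mul : ∀ a b : A, ρ (a * b) = ρ a * ρ b
  counit_id : ∀ a : A,
    (TensorProduct.rid k A) ((LinearMap.lTensor A Coalgebra.counit) (ρ a)) = a
  coassoc : ∀ a : A,
    (LinearMap.rTensor H ρ) (ρ a) =
      (ρ 1 ⊗ₜ[k] (1 : H)) *
        ((TensorProduct.assoc k A H H).symm ((LinearMap.lTensor A Coalgebra.comul) (ρ a)))

noncomputable section

variable (k : Type*) [Field k] (H A : Type*) [Ring H] [HopfAlgebra k H] [Ring A] [Algebra k A]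

/-- The coaction `δ = I ⊗ Δ` making `A ⊗ H` an `H`-comodule algebra. -/
def trivialCoaction : A ⊗[k] H →ₗ[k] (A ⊗[k] H) ⊗[k] H :=
  (TensorProduct.assoc k A H H).symm.toLinearMap ∘ₗ LinearMap.lTensor A Coalgebra.comul

/-- A non-unital subalgebra `W` of the `H`-comodule algebra `(A ⊗ H, δ = I ⊗ Δ)` is an
`H`-subcomodule subalgebra when `δ(W) ⊆ W ⊗ H`. -/
def IsSubcomoduleSubalg (W : NonUnitalSubalgebra k (A ⊗[k] H)) : Prop :=
  ∀ w ∈ W, trivialCoaction k H A w ∈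
    LinearMap.range (LinearMap.rTensor H (Submodule.subtype W.toSubmodule))

open LinearMap

section RightSlice

variable {R M M' N N' : Type*} [CommRing R] [AddCommGroup M] [Module R M]
  [AddCommGroup M'] [Module R M'] [AddCommGroup N] [Module R N] [AddCommGroup N'] [Module R N']

def rightSlice (φ : Module.Dual R N) : M ⊗[R] N →ₗ[R] M :=
  (TensorProduct.rid R M).toLinearMap ∘ₗ lTensor M φ

@[simp]
lemma rightSlice_tmul (φ : Module.Dual R N) (m : M) (n : N) :
    rightSlice φ (m ⊗ₜ[R] n) = φ n • m := by
  simp [rightSlice]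

lemma rightSlice_rTensor (φ : Module.Dual R N) (f : M →ₗ[R] M') (x : M ⊗[R] N) :
    rightSlice φ (rTensor N f x) = f (rightSlice φ x) := by
  induction x using TensorProduct.induction_on <;> simp_all

lemma rightSlice_assoc_symm (φ : Module.Dual R N) (y : M ⊗[R] (N' ⊗[R] N)) :
    rightSlice φ ((TensorProduct.assoc R M N' N).symm y) = lTensor M (rightSlice φ) y := by
  induction y using TensorProduct.induction_on with
  | zero => simp
  | tmul m z => induction z using TensorProduct.induction_on <;> simp_all [tmul_add]
  | add y₁ y₂ h₁ h₂ => simp only [map_add, h₁, h₂]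

lemma eq_zero_of_forall_rightSlice_eq_zero [Module.Free R N] {x : M ⊗[R] N}
    (hx : ∀ φ : Module.Dual R N, rightSlice φ x = 0) : x = 0 := by
  let b := Module.Free.chooseBasis R N
  have coord_eq : ∀ (y : M ⊗[R] N) i,
      TensorProduct.equivFinsuppOfBasisRight b y i = rightSlice (b.coord i) y := by
    intro y i
    induction y using TensorProduct.induction_on with
    | zero => simp
    | tmul m n => simp
    | add y₁ y₂ h₁ h₂ => simp [h₁, h₂]
  apply (TensorProduct.equivFinsuppOfBasisRight b).injective
  ext i
  simp [coord_eq, hx]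

lemma mem_range_rTensor_subtype_iff [Module.Free R N] (p : Submodule R M) (x : M ⊗[R] N) :
    x ∈ range (rTensor N p.subtype) ↔ ∀ φ : Module.Dual R N, rightSlice φ x ∈ p := by
  refine ⟨?_, fun hx => ?_⟩
  · rintro ⟨y, rfl⟩ φ
    rw [rightSlice_rTensor]
    exact (rightSlice φ y).2
  · refine (rTensor_exact N (exact_subtype_mkQ p) p.mkQ_surjective x).mp ?_
    refine eq_zero_of_forall_rightSlice_eq_zero fun φ => ?_
    rw [rightSlice_rTensor, Submodule.mkQ_apply, Submodule.Quotient.mk_eq_zero]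
    exact hx φ

end RightSlice

section TensorAlgebra

variable {R M M' N : Type*} [CommRing R] [Ring M] [Algebra R M] [Ring M'] [Algebra R M']
  [Ring N] [Algebra R N]

lemma rightSlice_tmul_one_mul (φ : Module.Dual R N) (v : M) (y : M ⊗[R] N) :
    rightSlice φ ((v ⊗ₜ[R] (1 : N)) * y) = v * rightSlice φ y := by
  induction y using TensorProduct.induction_on with
  | zero => simp
  | tmul w n => simp [Algebra.TensorProduct.tmul_mul_tmul]
  | add y₁ y₂ h₁ h₂ => simp only [mul_add, map_add, h₁, h₂]

lemma tmul_one_mul_lTensor (f : N →ₗ[R] N) (v : M) (y : M ⊗[R] N) :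
    (v ⊗ₜ[R] (1 : N)) * lTensor M f y = lTensor M f ((v ⊗ₜ[R] (1 : N)) * y) := by
  induction y using TensorProduct.induction_on with
  | zero => simp
  | tmul w n => simp [Algebra.TensorProduct.tmul_mul_tmul]
  | add y₁ y₂ h₁ h₂ => simp only [mul_add, map_add, h₁, h₂]

lemma rTensor_mul_of_map_mul {f : M →ₗ[R] M'} (hf : ∀ a b, f (a * b) = f a * f b)
    (u v : M ⊗[R] N) : rTensor N f (u * v) = rTensor N f u * rTensor N f v :=
  (map_mul_iff (rTensor N f)).mpr (by ext; simp [hf]) u v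

end TensorAlgebra

section ComulSlice

variable {R C : Type*} [CommRing R] [AddCommGroup C] [Module R C] [Coalgebra R C]

def comulSlice (φ : Module.Dual R C) : C →ₗ[R] C :=
  rightSlice φ ∘ₗ Coalgebra.comul

lemma comulSlice_counit : comulSlice (Coalgebra.counit : Module.Dual R C) = LinearMap.id :=
  LinearMap.ext fun c => by simp [comulSlice, rightSlice]

lemma comul_comulSlice (φ : Module.Dual R C) (c : C) :
    Coalgebra.comul (comulSlice φ c) = lTensor C (comulSlice φ) (Coalgebra.comul c) := by
  rw [comulSlice, LinearMap.comp_apply, ← rightSlice_rTensor, ← Coalgebra.coassoc_symm_apply,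
    rightSlice_assoc_symm, lTensor_comp, LinearMap.comp_apply]

end ComulSlice

section PartialCoaction

variable {k H A}

lemma trivialCoaction_tmul (a : A) (h : H) :
    trivialCoaction k H A (a ⊗ₜ[k] h) =
      (TensorProduct.assoc k A H H).symm (a ⊗ₜ[k] Coalgebra.comul h) := by
  simp [trivialCoaction]

lemma trivialCoaction_mul (u v : A ⊗[k] H) :
    trivialCoaction k H A (u * v) = trivialCoaction k H A u * trivialCoaction k H A v := by
  have : trivialCoaction k H A = ((Algebra.TensorProduct.assoc k k k A H H).symm.toAlgHom.comp
      (Algebra.TensorProduct.map (AlgHom.id k A) (Bialgebra.comulAlgHom k H))).toLinearMap := by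
    ext a h
    simp [trivialCoaction, AlgebraTensorModule.assoc_eq]
  rw [this]
  simp only [AlgHom.toLinearMap_apply, map_mul]

lemma rightSlice_trivialCoaction (φ : Module.Dual k H) (x : A ⊗[k] H) :
    rightSlice φ (trivialCoaction k H A x) = lTensor A (comulSlice φ) x := by
  rw [trivialCoaction, LinearMap.comp_apply, LinearEquiv.coe_coe, rightSlice_assoc_symm,
    ← LinearMap.comp_apply, ← lTensor_comp, comulSlice]

lemma trivialCoaction_lTensor_comulSlice (φ : Module.Dual k H) (x : A ⊗[k] H) :
    trivialCoaction k H A (lTensor A (comulSlice φ) x) =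
      lTensor (A ⊗[k] H) (comulSlice φ) (trivialCoaction k H A x) := by
  induction x using TensorProduct.induction_on with
  | zero => simp
  | tmul a h =>
    rw [lTensor_tmul, trivialCoaction_tmul, trivialCoaction_tmul, comul_comulSlice, lTensor_tensor]
    simp
  | add x₁ x₂ h₁ h₂ => simp only [map_add, h₁, h₂]

lemma isSubcomoduleSubalg_iff (W : NonUnitalSubalgebra k (A ⊗[k] H)) :
    IsSubcomoduleSubalg k H A W ↔
      ∀ w ∈ W, ∀ φ : Module.Dual k H, rightSlice φ (trivialCoaction k H A w) ∈ W := by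
  simp only [IsSubcomoduleSubalg, mem_range_rTensor_subtype_iff,
    NonUnitalSubalgebra.mem_toSubmodule]

lemma IsSubcomoduleSubalg.inf {V W : NonUnitalSubalgebra k (A ⊗[k] H)}
    (hV : IsSubcomoduleSubalg k H A V) (hW : IsSubcomoduleSubalg k H A W) :
    IsSubcomoduleSubalg k H A (V ⊓ W) := by
  rw [isSubcomoduleSubalg_iff] at *
  exact fun w hw φ => ⟨hV w hw.1 φ, hW w hw.2 φ⟩

def partialCoassocSubmodule (ρ : A →ₗ[k] A ⊗[k] H) : Submodule k (A ⊗[k] H) :=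
  (range (rTensor H ρ)).comap (mulLeft k (ρ 1 ⊗ₜ[k] (1 : H)) ∘ₗ trivialCoaction k H A)

variable {ρ : A →ₗ[k] A ⊗[k] H}

lemma mem_partialCoassocSubmodule {x : A ⊗[k] H} :
    x ∈ partialCoassocSubmodule ρ ↔
      ∃ z, rTensor H ρ z = (ρ 1 ⊗ₜ[k] (1 : H)) * trivialCoaction k H A x :=
  Iff.rfl

lemma rho_mem_partialCoassocSubmodule (hρ : IsPartialCoaction k H A ρ) (a : A) :
    ρ a ∈ partialCoassocSubmodule ρ :=
  mem_partialCoassocSubmodule.mpr ⟨ρ a, hρ.coassoc a⟩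

lemma mul_mem_partialCoassocSubmodule (hρ : IsPartialCoaction k H A ρ) {x y : A ⊗[k] H}
    (hx : x ∈ partialCoassocSubmodule ρ) (hy : y ∈ partialCoassocSubmodule ρ) :
    x * y ∈ partialCoassocSubmodule ρ := by
  obtain ⟨zx, hzx⟩ := mem_partialCoassocSubmodule.mp hx
  obtain ⟨zy, hzy⟩ := mem_partialCoassocSubmodule.mp hy
  refine mem_partialCoassocSubmodule.mpr ⟨zx * zy, ?_⟩
  have rTensor_rho_one : rTensor H ρ 1 = ρ 1 ⊗ₜ[k] (1 : H) := rfl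
  calc rTensor H ρ (zx * zy)
      = rTensor H ρ (zx * 1) * trivialCoaction k H A y := by
        rw [rTensor_mul_of_map_mul hρ.map_mul, rTensor_mul_of_map_mul hρ.map_mul, hzy,
          rTensor_rho_one, mul_assoc]
    _ = (ρ 1 ⊗ₜ[k] (1 : H)) * trivialCoaction k H A (x * y) := by
        rw [mul_one, hzx, trivialCoaction_mul, mul_assoc]

def partialCoassocSubalgebra (hρ : IsPartialCoaction k H A ρ) :
    NonUnitalSubalgebra k (A ⊗[k] H) :=
  (partialCoassocSubmodule ρ).toNonUnitalSubalgebra fun _ _ =>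
    mul_mem_partialCoassocSubmodule hρ

lemma isSubcomoduleSubalg_partialCoassocSubalgebra (hρ : IsPartialCoaction k H A ρ) :
    IsSubcomoduleSubalg k H A (partialCoassocSubalgebra hρ) := by
  rw [isSubcomoduleSubalg_iff]
  intro x hx φ
  obtain ⟨z, hz⟩ := mem_partialCoassocSubmodule.mp hx
  refine mem_partialCoassocSubmodule.mpr ⟨lTensor A (comulSlice φ) z, ?_⟩
  rw [rightSlice_trivialCoaction, trivialCoaction_lTensor_comulSlice, tmul_one_mul_lTensor, ← hz]
  simp only [← LinearMap.comp_apply, rTensor_comp_lTensor, lTensor_comp_rTensor]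

lemma unit_mul_mem_range_of_mem_partialCoassocSubmodule {x : A ⊗[k] H}
    (hx : x ∈ partialCoassocSubmodule ρ) : ρ 1 * x ∈ Set.range ρ := by
  obtain ⟨z, hz⟩ := mem_partialCoassocSubmodule.mp hx
  refine ⟨rightSlice Coalgebra.counit z, ?_⟩
  rw [← rightSlice_rTensor, hz, rightSlice_tmul_one_mul, rightSlice_trivialCoaction,
    comulSlice_counit, lTensor_id, LinearMap.id_apply]

end PartialCoaction

/-- **Key step of the globalization theorem for partial coactions.**  Let `(A, ρ̄)` be a
partial `H`-comodule algebra and `B` the smallest `H`-subcomodule subalgebra of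
`(A ⊗ H, I ⊗ Δ)` containing `ρ̄(A)`.  Then `ρ̄(1_A) B ⊆ ρ̄(A)`; consequently `ρ̄(A)` is a
right ideal of `B` whose unity is the idempotent `ρ̄(1_A)`. -/
theorem unit_mul_B_subset
    (ρ : A →ₗ[k] A ⊗[k] H) (hρ : IsPartialCoaction k H A ρ)
    (B : NonUnitalSubalgebra k (A ⊗[k] H))
    (hBsub : IsSubcomoduleSubalg k H A B)
    (hBA : Set.range ρ ⊆ (B : Set (A ⊗[k] H)))
    (hBmin : ∀ W : NonUnitalSubalgebra k (A ⊗[k] H),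
      IsSubcomoduleSubalg k H A W → Set.range ρ ⊆ (W : Set (A ⊗[k] H)) → B ≤ W) :
    -- `ρ̄(1_A) B ⊆ ρ̄(A)`
    (∀ x ∈ B, ρ 1 * x ∈ Set.range ρ) ∧
    -- `ρ̄(1_A)` is an idempotent
    ρ 1 * ρ 1 = ρ 1 ∧
    -- consequently `ρ̄(A)` is a right ideal of `B` ...
    (∀ (a : A), ∀ x ∈ B, ρ a * x ∈ Set.range ρ) ∧
    -- ... with unity `ρ̄(1_A)`
    (∀ a : A, ρ 1 * ρ a = ρ a ∧ ρ a * ρ 1 = ρ a) := by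
  have hρA : Set.range ρ ⊆ (partialCoassocSubalgebra hρ : Set (A ⊗[k] H)) := by
    rintro _ ⟨a, rfl⟩
    exact rho_mem_partialCoassocSubmodule hρ a
  have hBP : B ≤ partialCoassocSubalgebra hρ :=
    (le_inf_iff.mp (hBmin _ (hBsub.inf (isSubcomoduleSubalg_partialCoassocSubalgebra hρ))
      (Set.subset_inter hBA hρA))).2
  have unit_mul : ∀ x ∈ B, ρ 1 * x ∈ Set.range ρ := fun x hx =>
    unit_mul_mem_range_of_mem_partialCoassocSubmodule (hBP hx)
  have unit_left (a : A) : ρ 1 * ρ a = ρ a := by rw [← hρ.map_mul, one_mul]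
  have unit_right (a : A) : ρ a * ρ 1 = ρ a := by rw [← hρ.map_mul, mul_one]
  refine ⟨unit_mul, unit_left 1, fun a x hx => ?_, fun a => ⟨unit_left a, unit_right a⟩⟩
  obtain ⟨b, hb⟩ := unit_mul x hx
  exact ⟨a * b, by rw [hρ.map_mul, hb, ← mul_assoc, unit_right]⟩

end
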